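/- Assume Turing Determinacy and suppose f : 2^ℕ → 2^ℕ is such that for all x, y in some cone (i.e., all x, y Turing above some fixed z), x ≡_T y implies f(x) = f(y). Then f is literally constant on a cone: there exist w ∈ 2^ℕ and c ∈ 2^ℕ such that f(x) = c for all x ≥_T w. -/

import Mathlib

/-! Oracle computability preliminaries: codes for oracle partial recursive
functions, a standard numbering `φ`, Turing reducibility, and related notions. -/

namespace MC

/-- Codes for oracle partial recursive functions. -/
inductive OCode : Type
  | zero : OCode
  | succ : OCode
  | left : OCode
  | right : OCode
  | oracle : OCode
  | pair : OCode → OCode → OCode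
  | comp : OCode → OCode → OCode
  | prec : OCode → OCode → OCode
  | rfind' : OCode → OCode

/-- Evaluation of an oracle code with oracle `o : ℕ → ℕ`. -/
def evalo (o : ℕ → ℕ) : OCode → ℕ →. ℕ
  | OCode.zero => pure 0
  | OCode.succ => fun n => Part.some (n + 1)
  | OCode.left => fun n => Part.some (Nat.unpair n).1
  | OCode.right => fun n => Part.some (Nat.unpair n).2
  | OCode.oracle => fun n => Part.some (o n)
  | OCode.pair cf cg => fun n => Nat.pair <$> evalo o cf n <*> evalo o cg n
  | OCode.comp cf cg => fun n => evalo o cg n >>= evalo o cf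
  | OCode.prec cf cg =>
    Nat.unpaired fun a n =>
      n.rec (evalo o cf a) fun y IH => do
        let i ← IH
        evalo o cg (Nat.pair a (Nat.pair y i))
  | OCode.rfind' cf =>
    Nat.unpaired fun a m =>
      (Nat.rfind fun n => (fun m => m = 0) <$> evalo o cf (Nat.pair a (n + m))).map (· + m)

/-- A standard numbering of oracle codes. -/
def ofNatOCode : ℕ → OCode
  | 0 => OCode.zero
  | 1 => OCode.succ
  | 2 => OCode.left
  | 3 => OCode.right
  | 4 => OCode.oracle
  | n + 5 =>
    let m := n.div2.div2
    have hm : m < n + 5 := by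
      simp only [m, Nat.div2_val]
      exact
        lt_of_le_of_lt (le_trans (Nat.div_le_self _ _) (Nat.div_le_self _ _))
          (Nat.lt_succ_of_le (Nat.le_add_right _ _))
    have _m1 : m.unpair.1 < n + 5 := lt_of_le_of_lt m.unpair_left_le hm
    have _m2 : m.unpair.2 < n + 5 := lt_of_le_of_lt m.unpair_right_le hm
    match n.bodd, n.div2.bodd with
    | false, false => OCode.pair (ofNatOCode m.unpair.1) (ofNatOCode m.unpair.2)
    | false, true  => OCode.comp (ofNatOCode m.unpair.1) (ofNatOCode m.unpair.2)
    | true , false => OCode.prec (ofNatOCode m.unpair.1) (ofNatOCode m.unpair.2)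
    | true , true  => OCode.rfind' (ofNatOCode m)
decreasing_by
  all_goals first
    | exact Nat.le_of_lt_succ _m1
    | exact Nat.le_of_lt_succ _m2
    | exact Nat.le_of_lt_succ hm
    | exact _m1
    | exact _m2
    | exact hm

/-- `φ e x` is the `e`-th partial function computable with oracle `x ∈ 2^ℕ`. -/
def φ (e : ℕ) (x : ℕ → Bool) : ℕ →. ℕ :=
  evalo (fun n => cond (x n) 1 0) (ofNatOCode e)

/-- `odot e x` ("`e ⊙_T x`") is `φ e x` when the latter is total with values in `{0,1}`
(read as an element of Cantor space), and undefined otherwise. -/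
def odot (e : ℕ) (x : ℕ → Bool) : Part (ℕ → Bool) :=
  ⟨(∀ n, (φ e x n).Dom) ∧ ∀ n, ∀ m ∈ φ e x n, m ≤ 1,
   fun h n => decide ((φ e x n).get (h.1 n) = 1)⟩

/-- Turing reducibility: `x = φ_e^y` for some `e`. -/
def TRed (x y : ℕ → Bool) : Prop := ∃ e, x ∈ odot e y

/-- Turing equivalence. -/
def TEquiv (x y : ℕ → Bool) : Prop := TRed x y ∧ TRed y x

open scoped Classical in
/-- `sdot (i,j) x` ("`(i,j) ˢ⊙_T x`") is `φ_i^x` if `φ_i^x ∈ 2^ℕ` and `φ_j^{φ_i^x} = x`,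
and undefined otherwise. -/
noncomputable def sdot (p : ℕ × ℕ) (x : ℕ → Bool) : Part (ℕ → Bool) :=
  (odot p.1 x).bind fun y => if x ∈ odot p.2 y then Part.some y else Part.none

/-- The join of a sequence: `(⨁ₙ xₙ)(⟨i,j⟩) = x_j(i)`. -/
def joinSeq (f : ℕ → ℕ → Bool) : ℕ → Bool :=
  fun k => f (Nat.unpair k).2 (Nat.unpair k).1

/-- The join of two elements of Cantor space. -/
def join2 (a b : ℕ → Bool) : ℕ → Bool :=
  fun n => if n % 2 = 0 then a (n / 2) else b ((n - 1) / 2)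

/-- Prepending a bit to an element of Cantor space. -/
def consBit (b : Bool) (x : ℕ → Bool) : ℕ → Bool :=
  fun n => match n with
  | 0 => b
  | n + 1 => x n

open scoped Classical in
/-- The Turing jump: `x′(n) = 1` iff `n ∈ dom(φ_n^x)`. -/
noncomputable def jump (x : ℕ → Bool) : ℕ → Bool :=
  fun n => decide (φ n x n).Dom

/-- The constant-zero element of Cantor space. -/
def zeros : ℕ → Bool := fun _ => false

end MC

/-- Turing Determinacy: every `≡_T`-invariant set contains a cone or is disjoint from a cone. -/
def TD : Prop :=
  ∀ A : Set (ℕ → Bool), (∀ x y, x ∈ A → MC.TEquiv x y → y ∈ A) →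
    (∃ z, ∀ x, MC.TRed z x → x ∈ A) ∨ ∃ z, ∀ x, MC.TRed z x → x ∉ A

/-! For each bit `n`, the set of `x` with `z ≤_T x → f(x)(n) = 1` is `≡_T`-invariant, so by
Turing Determinacy the `n`-th bit of `f` is constant on some cone with base `wₙ`. The join of
`z, w₀, w₁, …` computes every `wₙ` and `z`, so above it all bits of `f` are constant.

Transitivity of `≤_T` comes from substituting a code for the oracle calls of another code;
a column of a join is computed by querying the oracle at `⟨i, k⟩`. -/

namespace MC

theorem ofNatOCode_surjective : Function.Surjective ofNatOCode := by
  intro c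
  induction c with
  | zero => exact ⟨0, by rw [ofNatOCode]⟩
  | succ => exact ⟨1, by rw [ofNatOCode]⟩
  | left => exact ⟨2, by rw [ofNatOCode]⟩
  | right => exact ⟨3, by rw [ofNatOCode]⟩
  | oracle => exact ⟨4, by rw [ofNatOCode]⟩
  | pair cf cg ihf ihg =>
    obtain ⟨a, rfl⟩ := ihf; obtain ⟨b, rfl⟩ := ihg
    exact ⟨Nat.bit false (Nat.bit false (Nat.pair a b)) + 5, by
      rw [ofNatOCode]; simp⟩
  | comp cf cg ihf ihg =>
    obtain ⟨a, rfl⟩ := ihf; obtain ⟨b, rfl⟩ := ihg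
    exact ⟨Nat.bit false (Nat.bit true (Nat.pair a b)) + 5, by
      rw [ofNatOCode]; simp⟩
  | prec cf cg ihf ihg =>
    obtain ⟨a, rfl⟩ := ihf; obtain ⟨b, rfl⟩ := ihg
    exact ⟨Nat.bit true (Nat.bit false (Nat.pair a b)) + 5, by
      rw [ofNatOCode]; simp⟩
  | rfind' cf ihf =>
    obtain ⟨a, rfl⟩ := ihf
    exact ⟨Nat.bit true (Nat.bit true a) + 5, by
      rw [ofNatOCode]; simp⟩

def toOracle (x : ℕ → Bool) : ℕ → ℕ := fun n => cond (x n) 1 0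

theorem mem_odot_iff {e : ℕ} {x y : ℕ → Bool} :
    x ∈ odot e y ↔ ∀ n, φ e y n = Part.some (toOracle x n) := by
  constructor
  · rintro ⟨⟨hdom, hle⟩, rfl⟩ n
    show φ e y n = Part.some (cond (decide ((φ e y n).get (hdom n) = 1)) 1 0)
    conv_lhs => rw [← Part.some_get (hdom n)]
    have := hle n _ (Part.get_mem (hdom n))
    interval_cases (φ e y n).get (hdom n) <;> rfl
  · intro h
    have hdom : ∀ n, (φ e y n).Dom := fun n => by rw [h n]; trivial
    refine ⟨⟨hdom, fun n m hm => ?_⟩, funext fun n => ?_⟩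
    · rw [h n, Part.mem_some_iff] at hm
      cases hx : x n <;> simp [hm, toOracle, hx]
    · show decide ((φ e y n).get (hdom n) = 1) = x n
      simp only [h n, Part.get_some, toOracle]
      cases x n <;> rfl

theorem tred_iff_exists_code {x y : ℕ → Bool} :
    TRed x y ↔ ∃ c : OCode, ∀ n, evalo (toOracle y) c n = Part.some (toOracle x n) := by
  simp only [TRed, mem_odot_iff]
  exact (ofNatOCode_surjective.exists
    (p := fun c => ∀ n, evalo (toOracle y) c n = Part.some (toOracle x n))).symm

def OCode.subst : OCode → OCode → OCode
  | .zero, _ => .zero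
  | .succ, _ => .succ
  | .left, _ => .left
  | .right, _ => .right
  | .oracle, d => d
  | .pair cf cg, d => .pair (cf.subst d) (cg.subst d)
  | .comp cf cg, d => .comp (cf.subst d) (cg.subst d)
  | .prec cf cg, d => .prec (cf.subst d) (cg.subst d)
  | .rfind' cf, d => .rfind' (cf.subst d)

theorem evalo_subst {o o' : ℕ → ℕ} {d : OCode} (hd : ∀ n, evalo o d n = Part.some (o' n))
    (c : OCode) : evalo o (c.subst d) = evalo o' c := by
  induction c with
  | zero | succ | left | right => rfl
  | oracle => exact funext hd
  | pair cf cg ihf ihg | comp cf cg ihf ihg | prec cf cg ihf ihg =>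
    rw [OCode.subst, evalo, evalo, ihf, ihg]
  | rfind' cf ihf => rw [OCode.subst, evalo, evalo, ihf]

theorem TRed.trans {x y z : ℕ → Bool} (hxy : TRed x y) (hyz : TRed y z) : TRed x z := by
  rw [tred_iff_exists_code] at *
  obtain ⟨c, hc⟩ := hxy
  obtain ⟨d, hd⟩ := hyz
  exact ⟨c.subst d, by rwa [evalo_subst hd]⟩

def OCode.const : ℕ → OCode
  | 0 => .zero
  | k + 1 => .comp .succ (OCode.const k)

theorem evalo_const (o : ℕ → ℕ) (k n : ℕ) : evalo o (OCode.const k) n = Part.some k := by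
  induction k with
  | zero => rfl
  | succ k ih => simp [OCode.const, evalo, ih]

theorem tred_joinSeq (g : ℕ → ℕ → Bool) (k : ℕ) : TRed (g k) (joinSeq g) := by
  refine tred_iff_exists_code.2
    ⟨.comp .oracle (.pair (.pair .left .right) (OCode.const k)), fun i => ?_⟩
  simp [evalo, evalo_const, Seq.seq, toOracle, joinSeq]

end MC

open MC

theorem TD.exists_cone_const_bool (td : TD) (g : (ℕ → Bool) → Bool) (z : ℕ → Bool)
    (hg : ∀ x y, TRed z x → TRed z y → TEquiv x y → g x = g y) :
    ∃ w b, ∀ x, TRed w x → TRed z x → g x = b := by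
  let A : Set (ℕ → Bool) := {x | TRed z x → g x = true}
  have invariant : ∀ x y, x ∈ A → TEquiv x y → y ∈ A := fun x y hx hxy hzy => by
    have hzx := hzy.trans hxy.2
    rw [← hg x y hzx hzy hxy]
    exact hx hzx
  rcases td A invariant with ⟨w, hw⟩ | ⟨w, hw⟩
  · exact ⟨w, true, hw⟩
  · refine ⟨w, false, fun x hwx hzx => ?_⟩
    simpa [A, hzx] using hw x hwx

/-- under TD, a function constant on `≡_T`-classes on a cone is literally
constant on a cone. -/
theorem constant_on_cone (td : TD) (f : (ℕ → Bool) → (ℕ → Bool)) (z : ℕ → Bool)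
    (hf : ∀ x y, MC.TRed z x → MC.TRed z y → MC.TEquiv x y → f x = f y) :
    ∃ w c, ∀ x, MC.TRed w x → f x = c := by
  choose w b hwb using fun n => td.exists_cone_const_bool (f · n) z
    fun x y hx hy hxy => congrFun (hf x y hx hy hxy) n
  let bases : ℕ → ℕ → Bool
    | 0 => z
    | n + 1 => w n
  refine ⟨joinSeq bases, b, fun x hx => funext fun n => ?_⟩
  exact hwb n x ((tred_joinSeq bases (n + 1)).trans hx) ((tred_joinSeq bases 0).trans hx)
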